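/- Fix a field k and an integer n ≥ 2, and let H be the hypergraph on vertex set V = {1, …, n} whose edges are all subsets of V of size 2 or 3. Then the toric ideal I_H is generated by its elements of total degree at most 3; that is, I_H is generated by quadrics and cubics. -/
import Mathlib


open MvPolynomial
set_option linter.unusedSectionVars false
set_option linter.unusedVariables false

namespace ToricHG

variable (K : Type) [Field K] (V : Type) [Fintype V] [DecidableEq V]

/-- The edges of a hypergraph with edge set `E`, as a type. -/
abbrev Edge (E : Finset (Finset V)) : Type := {e : Finset V // e ∈ E}

/-- The monomial map `t_e ↦ ∏_{v ∈ e} x_v`. -/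
noncomputable def phiH (E : Finset (Finset V)) :
    MvPolynomial (Edge V E) K →ₐ[K] MvPolynomial V K :=
  aeval (fun e : Edge V E => ∏ v ∈ e.1, (X v : MvPolynomial V K))

/-- The toric ideal of a hypergraph. -/
noncomputable def toricIdeal (E : Finset (Finset V)) :
    Ideal (MvPolynomial (Edge V E) K) :=
  RingHom.ker (phiH K V E).toRingHom

/-- The number of edges of the multiset `M` containing `v`, counted with multiplicity. -/
def degIn (E : Finset (Finset V)) (v : V) (M : Multiset (Edge V E)) : ℕ :=
  Multiset.card (M.filter (fun e => v ∈ e.1))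

/-- The bicolored edge multiset `(B, R)` is balanced. -/
def Balanced (E : Finset (Finset V)) (B R : Multiset (Edge V E)) : Prop :=
  ∀ v : V, degIn V E v B = degIn V E v R

/-- The binomial arising from the bicolored edge multiset `(B, R)`. -/
noncomputable def binom (E : Finset (Finset V)) (B R : Multiset (Edge V E)) :
    MvPolynomial (Edge V E) K :=
  (B.map fun e => (X e : MvPolynomial (Edge V E) K)).prod -
    (R.map fun e => (X e : MvPolynomial (Edge V E) K)).prod

/-- The balanced edge set `(B, R)` is primitive. -/
def Primitive (E : Finset (Finset V)) (B R : Multiset (Edge V E)) : Prop :=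
  Balanced V E B R ∧
    ¬ ∃ B' R' : Multiset (Edge V E),
        ¬(B' = 0 ∧ R' = 0) ∧ Balanced V E B' R' ∧ B' < B ∧ R' < R

/-- The balanced edge set `(Fb, Fr)` is reducible with separator `S` and
decomposition `((G1b, G1r), S, (G2b, G2r))`. -/
def ReducibleWith (E : Finset (Finset V))
    (Fb Fr S G1b G1r G2b G2r : Multiset (Edge V E)) : Prop :=
  Balanced V E Fb Fr ∧ S ≠ 0 ∧ S.toFinset ⊆ (Fb + Fr).toFinset ∧
    Balanced V E G1b G1r ∧ Balanced V E G2b G2r ∧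
    ¬(G1b = Fb ∧ G1r = Fr) ∧ ¬(G2b = Fb ∧ G2r = Fr) ∧
    S = G1r ∩ G2b ∧ Fb = G1b + G2b ∧ Fr = G1r + G2r

/-- `S` is a splitting set of the balanced edge set `(Eb, Er)` with
decomposition `((G1b, G1r), S, (G2b, G2r))`, i.e. `(Eb, Er) + S` is reducible with
separator `S` and this decomposition. -/
def SplittingSetWith (E : Finset (Finset V))
    (Eb Er S G1b G1r G2b G2r : Multiset (Edge V E)) : Prop :=
  ReducibleWith V E (Eb + S) (Er + S) S G1b G1r G2b G2r

/-- `S` is a proper splitting set of the balanced edge set `(Eb, Er)`. -/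
def ProperSplittingSet (E : Finset (Finset V))
    (Eb Er S : Multiset (Edge V E)) : Prop :=
  ∃ G1b G1r G2b G2r : Multiset (Edge V E),
    SplittingSetWith V E Eb Er S G1b G1r G2b G2r ∧ S < G1r ∧ S < G2b

/-- A binomial: the difference of two distinct monic monomials. -/
def IsBinomial (E : Finset (Finset V)) (f : MvPolynomial (Edge V E) K) : Prop :=
  ∃ a b : (Edge V E) →₀ ℕ, a ≠ b ∧ f = monomial a 1 - monomial b 1

/-- `f` is an indispensable binomial of the toric ideal of the hypergraph. -/
def Indispensable (E : Finset (Finset V)) (f : MvPolynomial (Edge V E) K) : Prop :=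
  ∀ G : Set (MvPolynomial (Edge V E) K),
    (∀ g ∈ G, IsBinomial K V E g) → Ideal.span G = toricIdeal K V E →
      f ∈ G ∨ -f ∈ G

/-- The Graver basis of the toric ideal of the hypergraph: the binomials arising from
primitive balanced edge sets `(B, R)` with `B ≠ R`. -/
def GraverSet (E : Finset (Finset V)) : Set (MvPolynomial (Edge V E) K) :=
  {f | ∃ B R : Multiset (Edge V E), Primitive V E B R ∧ B ≠ R ∧ f = binom K V E B R}

/-- The ideal `I` is generated in degree at most `d`. -/
def GenInDegLE {σ : Type} (I : Ideal (MvPolynomial σ K)) (d : ℕ) : Prop :=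
  I = Ideal.span {f | f ∈ I ∧ f.totalDegree ≤ d}

end ToricHG

namespace ToricHG

section Aux

variable {K : Type} [Field K] {V : Type} [Fintype V] [DecidableEq V] {E : Finset (Finset V)}

/-- product of variables indexed by a multiset -/
noncomputable def mmon (K : Type) [Field K] {τ : Type} (M : Multiset τ) : MvPolynomial τ K :=
  (M.map fun e => X e).prod

@[simp] lemma mmon_zero {τ : Type} : mmon K (0 : Multiset τ) = 1 := rfl

@[simp] lemma mmon_cons {τ : Type} (e : τ) (M : Multiset τ) :
    mmon K (e ::ₘ M) = X e * mmon K M := by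
  simp [mmon]

@[simp] lemma mmon_add {τ : Type} (A B : Multiset τ) :
    mmon K (A + B) = mmon K A * mmon K B := by
  simp [mmon, Multiset.prod_add]

@[simp] lemma mmon_singleton {τ : Type} (e : τ) : mmon K ({e} : Multiset τ) = X e := by
  simp [mmon]

lemma mmon_eq_monomial {τ : Type} [DecidableEq τ] (M : Multiset τ) :
    mmon K M = monomial M.toFinsupp 1 := by
  induction M using Multiset.induction_on with
  | empty =>
      simp only [mmon_zero, map_zero]
      rw [monomial_zero']
      simp
  | cons a M ih =>
      rw [mmon_cons, ih]
      have : (X a : MvPolynomial τ K) = monomial (Finsupp.single a 1) 1 := by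
        rw [← X_pow_eq_monomial, pow_one]
      rw [this, monomial_mul, one_mul]
      congr 1
      rw [← Multiset.singleton_add, Multiset.toFinsupp_add, Multiset.toFinsupp_singleton,
        add_comm]

lemma totalDegree_mmon_le {τ : Type} (M : Multiset τ) :
    (mmon K M).totalDegree ≤ Multiset.card M := by
  induction M using Multiset.induction_on with
  | empty => simp
  | cons a M ih =>
      rw [mmon_cons]
      calc (X a * mmon K M).totalDegree ≤ (X a : MvPolynomial τ K).totalDegree + (mmon K M).totalDegree :=
            totalDegree_mul _ _
        _ ≤ 1 + Multiset.card M := by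
            have := totalDegree_X (R := K) a
            omega
        _ = Multiset.card (a ::ₘ M) := by simp [add_comm]

/-- vertex multiset of a multiset of edges -/
def Dm (M : Multiset (Edge V E)) : Multiset V := M.bind fun e => e.1.val

@[simp] lemma Dm_zero : Dm (0 : Multiset (Edge V E)) = 0 := rfl

@[simp] lemma Dm_cons (e : Edge V E) (M : Multiset (Edge V E)) :
    Dm (e ::ₘ M) = e.1.val + Dm M := Multiset.cons_bind _ _ _

@[simp] lemma Dm_add (A B : Multiset (Edge V E)) : Dm (A + B) = Dm A + Dm B :=
  Multiset.add_bind _ _ _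

@[simp] lemma Dm_singleton (e : Edge V E) : Dm ({e} : Multiset (Edge V E)) = e.1.val := by
  simp [Dm]

lemma mem_Dm {v : V} {M : Multiset (Edge V E)} : v ∈ Dm M ↔ ∃ e ∈ M, v ∈ e.1 := by
  simp [Dm, Multiset.mem_bind]

lemma phi_mmon (M : Multiset (Edge V E)) :
    phiH K V E (mmon K M) = mmon K (Dm M) := by
  induction M using Multiset.induction_on with
  | empty => simp
  | cons e M ih =>
      rw [mmon_cons, map_mul, ih, Dm_cons, mmon_add]
      congr 1
      rw [phiH, aeval_X]
      rfl

lemma mem_toric_iff {f : MvPolynomial (Edge V E) K} :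
    f ∈ toricIdeal K V E ↔ phiH K V E f = 0 := RingHom.mem_ker

/-- the ideal generated in degree at most 3 -/
noncomputable def JJ (K : Type) [Field K] (V : Type) [Fintype V] [DecidableEq V]
    (E : Finset (Finset V)) : Ideal (MvPolynomial (Edge V E) K) :=
  Ideal.span {f | f ∈ toricIdeal K V E ∧ f.totalDegree ≤ 3}

lemma moveJ {A B : Multiset (Edge V E)} (hD : Dm A = Dm B)
    (hA : Multiset.card A ≤ 3) (hB : Multiset.card B ≤ 3) :
    mmon K A - mmon K B ∈ JJ K V E := by
  apply Ideal.subset_span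
  refine ⟨?_, ?_⟩
  · rw [mem_toric_iff, map_sub, phi_mmon, phi_mmon, hD, sub_self]
  · calc (mmon K A - mmon K B).totalDegree
        ≤ max (mmon K A).totalDegree (-(mmon K B)).totalDegree := by
          rw [sub_eq_add_neg]; exact totalDegree_add _ _
      _ ≤ 3 := by
          rw [totalDegree_neg]
          have h1 := totalDegree_mmon_le (K := K) A
          have h2 := totalDegree_mmon_le (K := K) B
          omega

lemma moveCtx {A B : Multiset (Edge V E)} (C : Multiset (Edge V E)) (hD : Dm A = Dm B)
    (hA : Multiset.card A ≤ 3) (hB : Multiset.card B ≤ 3) :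
    mmon K (A + C) - mmon K (B + C) ∈ JJ K V E := by
  rw [mmon_add, mmon_add, ← sub_mul]
  exact Ideal.mul_mem_right _ _ (moveJ hD hA hB)

/-- number of 3-edges -/
def n3 (M : Multiset (Edge V E)) : ℕ := Multiset.card (M.filter fun e => e.1.card = 3)

@[simp] lemma n3_zero : n3 (0 : Multiset (Edge V E)) = 0 := rfl

lemma n3_cons (e : Edge V E) (M : Multiset (Edge V E)) :
    n3 (e ::ₘ M) = (if e.1.card = 3 then 1 else 0) + n3 M := by
  simp only [n3, Multiset.filter_cons, Multiset.card_add]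
  congr 1
  split <;> simp

lemma n3_add (A B : Multiset (Edge V E)) : n3 (A + B) = n3 A + n3 B := by
  simp [n3, Multiset.filter_add]

lemma n3_singleton (e : Edge V E) : n3 ({e} : Multiset (Edge V E)) = if e.1.card = 3 then 1 else 0 := by
  rw [show ({e} : Multiset (Edge V E)) = e ::ₘ 0 from rfl, n3_cons, n3_zero, add_zero]

lemma card_val (e : Edge V E) : Multiset.card e.1.val = e.1.card := rfl

section WithHE

variable (hE : ∀ s : Finset V, s ∈ E ↔ s.card = 2 ∨ s.card = 3)
include hE

/-- edge constructor -/
def mkE (s : Finset V) (h : s.card = 2 ∨ s.card = 3) : Edge V E := ⟨s, (hE s).2 h⟩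

@[simp] lemma mkE_val (s : Finset V) (h) : (mkE hE s h).1 = s := rfl

lemma card23 (e : Edge V E) : e.1.card = 2 ∨ e.1.card = 3 := (hE _).1 e.2

lemma card2_of_ne3 {e : Edge V E} (h : e.1.card ≠ 3) : e.1.card = 2 :=
  (card23 hE e).resolve_right h

lemma card_Dm (M : Multiset (Edge V E)) :
    Multiset.card (Dm M) = 2 * Multiset.card M + n3 M := by
  induction M using Multiset.induction_on with
  | empty => simp
  | cons e M ih =>
      rw [Dm_cons, Multiset.card_add, ih, n3_cons, card_val]
      rcases card23 hE e with h | h <;> simp [h] <;> omega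

end WithHE

lemma exists_pair_eq {s : Finset V} (h2 : s.card = 2) {b : V} (hb : b ∈ s) :
    ∃ c, c ≠ b ∧ s = {b, c} := by
  obtain ⟨x, y, hxy, rfl⟩ := Finset.card_eq_two.1 h2
  rcases Finset.mem_insert.1 hb with rfl | hb'
  · exact ⟨y, fun h => hxy h.symm, rfl⟩
  · rcases Finset.mem_singleton.1 hb' with rfl
    exact ⟨x, fun h => hxy h, Finset.pair_comm x b⟩

lemma cons2_of_mem {τ : Type} [DecidableEq τ] {M : Multiset τ} {x y : τ}
    (hx : x ∈ M) (hy : y ∈ M.erase x) : ∃ R, M = x ::ₘ y ::ₘ R := by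
  obtain ⟨T, hT⟩ := Multiset.exists_cons_of_mem hy
  exact ⟨T, by rw [← Multiset.cons_erase hx, hT]⟩

lemma pair_val {u v : V} (h : u ≠ v) : ({u, v} : Finset V).val = u ::ₘ v ::ₘ 0 := by
  rw [Finset.insert_val_of_notMem (by simp [h])]
  rfl

lemma mem_val_edge {v : V} {e : Edge V E} (h : v ∈ e.1) : v ∈ e.1.val := h

section NF

variable (hE : ∀ s : Finset V, s ∈ E ↔ s.card = 2 ∨ s.card = 3)
include hE

lemma exists_nf (M : Multiset (Edge V E)) :
    ∃ M', Dm M' = Dm M ∧ n3 M' ≤ 1 ∧ mmon K M - mmon K M' ∈ JJ K V E := by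
  generalize hk : n3 M = k
  induction k using Nat.strong_induction_on generalizing M with
  | _ k IH =>
  subst hk
  by_cases h1 : n3 M ≤ 1
  · exact ⟨M, rfl, h1, by rw [sub_self]; exact zero_mem _⟩
  · push_neg at h1
    -- extract two 3-edges
    have hF : 2 ≤ Multiset.card (M.filter fun e => e.1.card = 3) := h1
    obtain ⟨e₁, he₁F⟩ := (Multiset.card_pos_iff_exists_mem (s := M.filter fun e => e.1.card = 3)).1 (by omega)
    obtain ⟨F', hF'⟩ := Multiset.exists_cons_of_mem he₁F
    have hF'card : 1 ≤ Multiset.card F' := by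
      have := congrArg Multiset.card hF'
      simp at this; omega
    obtain ⟨e₂, he₂F'⟩ := (Multiset.card_pos_iff_exists_mem (s := F')).1 (by omega)
    have he₁ : e₁ ∈ M ∧ e₁.1.card = 3 := Multiset.mem_filter.1 he₁F
    have he₂ : e₂ ∈ M ∧ e₂.1.card = 3 := by
      have h : e₂ ∈ M.filter fun e => e.1.card = 3 := by
        rw [hF']; exact Multiset.mem_cons_of_mem he₂F'
      exact Multiset.mem_filter.1 h
    have hsub : (e₁ ::ₘ e₂ ::ₘ 0) ≤ M := by
      calc e₁ ::ₘ e₂ ::ₘ 0 ≤ e₁ ::ₘ F' := by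
            refine Multiset.cons_le_cons e₁ ?_
            simpa [Multiset.singleton_le] using he₂F'
        _ = M.filter fun e => e.1.card = 3 := hF'.symm
        _ ≤ M := Multiset.filter_le _ _
    obtain ⟨R, hR⟩ := Multiset.le_iff_exists_add.1 hsub
    -- pick u, v
    obtain ⟨u, hu⟩ := Finset.card_pos.1 (by rw [he₁.2]; norm_num)
    obtain ⟨v, hv, hvu⟩ := Finset.exists_mem_ne (by rw [he₂.2]; norm_num) u
    -- new edges
    set f₁ : Edge V E := mkE hE (e₁.1.erase u) (Or.inl (by rw [Finset.card_erase_of_mem hu, he₁.2]))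
    set f₂ : Edge V E := mkE hE (e₂.1.erase v) (Or.inl (by rw [Finset.card_erase_of_mem hv, he₂.2]))
    set f₃ : Edge V E := mkE hE {u, v} (Or.inl (Finset.card_pair (Ne.symm hvu)))
    set A : Multiset (Edge V E) := e₁ ::ₘ e₂ ::ₘ 0
    set B : Multiset (Edge V E) := f₁ ::ₘ f₂ ::ₘ f₃ ::ₘ 0
    have hDab : Dm A = Dm B := by
      have h1 : e₁.1.val = u ::ₘ e₁.1.val.erase u := (Multiset.cons_erase (mem_val_edge hu)).symm
      have h2 : e₂.1.val = v ::ₘ e₂.1.val.erase v := (Multiset.cons_erase (mem_val_edge hv)).symm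
      show Dm (e₁ ::ₘ e₂ ::ₘ 0) = Dm (f₁ ::ₘ f₂ ::ₘ f₃ ::ₘ 0)
      simp only [Dm_cons, Dm_zero, add_zero, mkE_val, f₁, f₂, f₃, Finset.erase_val,
        pair_val (Ne.symm hvu)]
      obtain ⟨X₁, hX₁⟩ : ∃ X, (e₁.1.val).erase u = X := ⟨_, rfl⟩
      obtain ⟨X₂, hX₂⟩ : ∃ X, (e₂.1.val).erase v = X := ⟨_, rfl⟩
      rw [hX₁, hX₂, show e₁.1.val = u ::ₘ X₁ from hX₁ ▸ (Multiset.cons_erase (mem_val_edge hu)).symm,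
        show e₂.1.val = v ::ₘ X₂ from hX₂ ▸ (Multiset.cons_erase (mem_val_edge hv)).symm]
      simp only [← Multiset.singleton_add]
      abel
    have hMA : M = A + R := hR
    have hmove : mmon K M - mmon K (B + R) ∈ JJ K V E := by
      rw [hMA]; exact moveCtx R hDab (by simp [A]) (by simp [B])
    have hn3B : n3 (B + R) = n3 M - 2 := by
      have hA3 : n3 A = 2 := by simp [A, n3_cons, n3_singleton, he₁.2, he₂.2]
      have hB3 : n3 B = 0 := by
        simp [B, n3_cons, n3_singleton, f₁, f₂, f₃, Finset.card_erase_of_mem hu, he₁.2,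
          Finset.card_erase_of_mem hv, he₂.2, Finset.card_pair (Ne.symm hvu)]
      rw [n3_add, hB3, hMA, n3_add, hA3]
      omega
    have hlt : n3 (B + R) < n3 M := by omega
    obtain ⟨M'', hD'', hn3'', hJ''⟩ := IH _ hlt (B + R) rfl
    refine ⟨M'', ?_, hn3'', ?_⟩
    · rw [hD'', hMA, Dm_add, Dm_add, hDab]
    · have := Ideal.add_mem _ hmove hJ''
      rwa [sub_add_sub_cancel] at this
end NF

lemma Jglue {R : Type} [CommRing R] {I : Ideal R} {a b c : R}
    (h1 : a - c ∈ I) (h2 : b - c ∈ I) : a - b ∈ I := by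
  have := I.sub_mem h1 h2; rwa [sub_sub_sub_cancel_right] at this

lemma Jglue2 {R : Type} [CommRing R] {I : Ideal R} {a b c : R}
    (h1 : a - b ∈ I) (h2 : b - c ∈ I) : a - c ∈ I := by
  have := I.add_mem h1 h2; rwa [sub_add_sub_cancel] at this

section Key

variable (hE : ∀ s : Finset V, s ∈ E ↔ s.card = 2 ∨ s.card = 3)
include hE

lemma key : ∀ (s : ℕ) (M N : Multiset (Edge V E)), Dm M = Dm N → Multiset.card (Dm M) = s →
    mmon K M - mmon K N ∈ JJ K V E := by
  intro s
  induction s using Nat.strong_induction_on with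
  | _ s IH =>
  have factor : ∀ (M N : Multiset (Edge V E)) (e : Edge V E), Dm M = Dm N →
      Multiset.card (Dm M) = s → e ∈ M → e ∈ N → mmon K M - mmon K N ∈ JJ K V E := by
    intro M N e hD hs heM heN
    obtain ⟨M', rfl⟩ := Multiset.exists_cons_of_mem heM
    obtain ⟨N', rfl⟩ := Multiset.exists_cons_of_mem heN
    rw [Dm_cons, Dm_cons] at hD
    have hD' : Dm M' = Dm N' := add_left_cancel hD
    have hpos : 0 < Multiset.card e.1.val := by
      rw [card_val]; rcases card23 hE e with h | h <;> omega
    have hlt : Multiset.card (Dm M') < s := by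
      rw [← hs, Dm_cons, Multiset.card_add]; omega
    have hmem := IH _ hlt M' N' hD' rfl
    rw [mmon_cons, mmon_cons, ← mul_sub]
    exact Ideal.mul_mem_left _ _ hmem
  have hDzero : ∀ P : Multiset (Edge V E), Dm P = 0 → P = 0 := by
    intro P h
    by_contra hne
    obtain ⟨e, he⟩ := Multiset.exists_mem_of_ne_zero hne
    have hpos : 0 < e.1.card := by rcases card23 hE e with h2 | h2 <;> omega
    obtain ⟨v, hv⟩ := Finset.card_pos.1 hpos
    have : v ∈ Dm P := mem_Dm.2 ⟨e, he, hv⟩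
    rw [h] at this
    simp at this
  have hsingle : ∀ P : Multiset (Edge V E), P ≠ 0 → Multiset.card (Dm P) ≤ 3 →
      ∃ e, P = {e} := by
    intro P hne hle
    obtain ⟨e, he⟩ := Multiset.exists_mem_of_ne_zero hne
    obtain ⟨P', rfl⟩ := Multiset.exists_cons_of_mem he
    refine ⟨e, ?_⟩
    by_cases hP' : P' = 0
    · rw [hP']
      rfl
    · exfalso
      obtain ⟨f, hf⟩ := Multiset.exists_mem_of_ne_zero hP'
      obtain ⟨P'', rfl⟩ := Multiset.exists_cons_of_mem hf
      have h1 : 2 ≤ Multiset.card e.1.val := by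
        rw [card_val]; rcases card23 hE e with h2 | h2 <;> omega
      have h2 : 2 ≤ Multiset.card f.1.val := by
        rw [card_val]; rcases card23 hE f with h2 | h2 <;> omega
      rw [Dm_cons, Dm_cons, Multiset.card_add, Multiset.card_add] at hle
      omega
  intro M N hD hs
  obtain ⟨M₁, hDM₁, hn3M₁, hJM⟩ := exists_nf (K := K) hE M
  obtain ⟨N₁, hDN₁, hn3N₁, hJN⟩ := exists_nf (K := K) hE N
  have hD1 : Dm M₁ = Dm N₁ := by rw [hDM₁, hDN₁, hD]
  have hs1 : Multiset.card (Dm M₁) = s := by rw [hDM₁, hs]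
  have hs1N : Multiset.card (Dm N₁) = s := by rw [← hD1, hs1]
  have hmain : mmon K M₁ - mmon K N₁ ∈ JJ K V E := by
    by_cases hcom : ∃ e, e ∈ M₁ ∧ e ∈ N₁
    · obtain ⟨e, heM, heN⟩ := hcom
      exact factor M₁ N₁ e hD1 hs1 heM heN
    push_neg at hcom
    by_cases hsmall : s ≤ 3
    · by_cases hM0 : M₁ = 0
      · have hN0 : N₁ = 0 := hDzero N₁ (by rw [← hD1, hM0]; rfl)
        rw [hM0, hN0, sub_self]
        exact zero_mem _
      · have hN0 : N₁ ≠ 0 := by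
          intro h
          exact hM0 (hDzero M₁ (by rw [hD1, h]; rfl))
        obtain ⟨e, rfl⟩ := hsingle M₁ hM0 (by omega)
        obtain ⟨f, rfl⟩ := hsingle N₁ hN0 (by rw [← hD1]; omega)
        have hef : e = f := by
          refine Subtype.ext (Finset.val_inj.1 ?_)
          have := hD1
          rwa [Dm_singleton, Dm_singleton] at this
        exact absurd (hef ▸ Multiset.mem_singleton_self f) (hcom e (Multiset.mem_singleton_self e))
    · -- s ≥ 4
      push_neg at hsmall
      have hcM := card_Dm hE M₁
      have hcN := card_Dm hE N₁
      have hpar : n3 M₁ = n3 N₁ := by omega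
      by_cases heven : n3 M₁ = 0
      · -- EVEN CASE
        have hall2M : ∀ e ∈ M₁, e.1.card = 2 := by
          intro e he
          refine card2_of_ne3 hE fun h3 => ?_
          have hmem : e ∈ M₁.filter (fun e => e.1.card = 3) := Multiset.mem_filter.2 ⟨he, h3⟩
          rw [Multiset.card_eq_zero.1 heven] at hmem
          simp at hmem
        have hall2N : ∀ e ∈ N₁, e.1.card = 2 := by
          intro e he
          refine card2_of_ne3 hE fun h3 => ?_
          have hmem : e ∈ N₁.filter (fun e => e.1.card = 3) := Multiset.mem_filter.2 ⟨he, h3⟩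
          have hevenN : n3 N₁ = 0 := by rw [← hpar]; exact heven
          rw [Multiset.card_eq_zero.1 hevenN] at hmem
          simp at hmem
        have hM₁ne : M₁ ≠ 0 := by
          intro h
          rw [h] at hs1
          simp at hs1
          omega
        obtain ⟨e₀, he₀M⟩ := Multiset.exists_mem_of_ne_zero hM₁ne
        obtain ⟨a, b, hab, he₀⟩ := Finset.card_eq_two.1 (hall2M e₀ he₀M)
        have hbD : b ∈ Dm N₁ := by
          rw [← hD1]
          exact mem_Dm.2 ⟨e₀, he₀M, by rw [he₀]; simp⟩
        obtain ⟨g, hgN, hbg⟩ := mem_Dm.1 hbD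
        obtain ⟨c, hcb, hg⟩ := exists_pair_eq (hall2N g hgN) hbg
        have hca : c ≠ a := by
          rintro rfl
          have hge : g = e₀ := Subtype.ext (by rw [hg, he₀, Finset.pair_comm])
          exact hcom e₀ he₀M (hge ▸ hgN)
        have haD : a ∈ Dm N₁ := by
          rw [← hD1]
          exact mem_Dm.2 ⟨e₀, he₀M, by rw [he₀]; simp⟩
        have hanotg : a ∉ g.1 := by
          rw [hg]
          simp only [Finset.mem_insert, Finset.mem_singleton]
          push_neg
          exact ⟨hab, Ne.symm hca⟩
        by_cases hax : ∃ h ∈ N₁, a ∈ h.1 ∧ c ∉ h.1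
        · obtain ⟨h, hhN, hah, hch⟩ := hax
          obtain ⟨x, hxa, hh⟩ := exists_pair_eq (hall2N h hhN) hah
          have hxc : x ≠ c := by rintro rfl; exact hch (by rw [hh]; simp)
          have hxb : x ≠ b := by
            rintro rfl
            have hhe : h = e₀ := Subtype.ext (by rw [hh, he₀])
            exact hcom e₀ he₀M (hhe ▸ hhN)
          have hhg : g ≠ h := fun hEq => hanotg (hEq ▸ hah)
          obtain ⟨R, hNdec⟩ := cons2_of_mem hhN ((Multiset.mem_erase_of_ne hhg).2 hgN)
          set xc := mkE hE {x, c} (Or.inl (Finset.card_pair hxc)) with hxcdef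
          set A : Multiset (Edge V E) := h ::ₘ g ::ₘ 0 with hAdef
          set B : Multiset (Edge V E) := e₀ ::ₘ xc ::ₘ 0 with hBdef
          have hDab : Dm A = Dm B := by
            show Dm (h ::ₘ g ::ₘ 0) = Dm (e₀ ::ₘ xc ::ₘ 0)
            simp only [Dm_cons, Dm_zero, add_zero, hxcdef, mkE_val]
            rw [hh, hg, he₀, pair_val (Ne.symm hxa), pair_val (Ne.symm hcb), pair_val hab,
              pair_val hxc]
            simp only [← Multiset.singleton_add]
            abel
          have hNdec' : N₁ = A + R := by rw [hNdec, hAdef]; simp [Multiset.cons_add]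
          have hND : Dm N₁ = Dm (B + R) := by
            rw [hNdec', Dm_add, Dm_add, hDab]
          have hmv : mmon K N₁ - mmon K (B + R) ∈ JJ K V E := by
            rw [hNdec']
            exact moveCtx R hDab (by simp [hAdef]) (by simp [hBdef])
          have hfac : mmon K M₁ - mmon K (B + R) ∈ JJ K V E := by
            refine factor M₁ (B + R) e₀ (hD1.trans hND) hs1 he₀M ?_
            rw [hBdef]
            exact Multiset.mem_add.2 (Or.inl (Multiset.mem_cons_self _ _))
          exact Jglue hfac hmv
        · push_neg at hax
          obtain ⟨h₀, hh₀N, hah₀⟩ := mem_Dm.1 haD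
          have hch₀ : c ∈ h₀.1 := hax h₀ hh₀N hah₀
          obtain ⟨y, hya, hh₀⟩ := exists_pair_eq (hall2N h₀ hh₀N) hah₀
          have hcy : c = y := by
            have := hh₀ ▸ hch₀
            rcases Finset.mem_insert.1 this with h' | h'
            · exact absurd h' hca
            · exact Finset.mem_singleton.1 h'
          rw [← hcy] at hh₀
          have hh₀g : h₀ ≠ g := fun hEq => hanotg (hEq ▸ hah₀)
          obtain ⟨R, hNdec⟩ := cons2_of_mem hh₀N ((Multiset.mem_erase_of_ne (Ne.symm hh₀g)).2 hgN)
          by_cases hkx : ∃ k ∈ R, c ∉ k.1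
          · obtain ⟨k, hkR, hck⟩ := hkx
            have hkN : k ∈ N₁ := by
              rw [hNdec]
              exact Multiset.mem_cons_of_mem (Multiset.mem_cons_of_mem hkR)
            obtain ⟨y₁, z₁, hyz, hk⟩ := Finset.card_eq_two.1 (hall2N k hkN)
            have hcy₁ : c ≠ y₁ := by rintro rfl; exact hck (by rw [hk]; simp)
            have hcz₁ : c ≠ z₁ := by rintro rfl; exact hck (by rw [hk]; simp)
            obtain ⟨R', hRdec⟩ := Multiset.exists_cons_of_mem hkR
            set cy := mkE hE {c, y₁} (Or.inl (Finset.card_pair hcy₁)) with hcydef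
            set cz := mkE hE {c, z₁} (Or.inl (Finset.card_pair hcz₁)) with hczdef
            set A : Multiset (Edge V E) := h₀ ::ₘ g ::ₘ k ::ₘ 0 with hAdef
            set B : Multiset (Edge V E) := e₀ ::ₘ cy ::ₘ cz ::ₘ 0 with hBdef
            have hDab : Dm A = Dm B := by
              show Dm (h₀ ::ₘ g ::ₘ k ::ₘ 0) = Dm (e₀ ::ₘ cy ::ₘ cz ::ₘ 0)
              simp only [Dm_cons, Dm_zero, add_zero, hcydef, hczdef, mkE_val]
              rw [hh₀, hg, hk, he₀, pair_val (Ne.symm hca), pair_val (Ne.symm hcb), pair_val hyz,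
                pair_val hab, pair_val hcy₁, pair_val hcz₁]
              simp only [← Multiset.singleton_add]
              abel
            have hNdec' : N₁ = A + R' := by
              rw [hNdec, hRdec, hAdef]
              simp [Multiset.cons_add]
            have hND : Dm N₁ = Dm (B + R') := by
              rw [hNdec', Dm_add, Dm_add, hDab]
            have hmv : mmon K N₁ - mmon K (B + R') ∈ JJ K V E := by
              rw [hNdec']
              exact moveCtx R' hDab (by simp [hAdef]) (by simp [hBdef])
            have hfac : mmon K M₁ - mmon K (B + R') ∈ JJ K V E := by
              refine factor M₁ (B + R') e₀ (hD1.trans hND) hs1 he₀M ?_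
              rw [hBdef]
              exact Multiset.mem_add.2 (Or.inl (Multiset.mem_cons_self _ _))
            exact Jglue hfac hmv
          · push_neg at hkx
            exfalso
            have hallc : ∀ k ∈ N₁, c ∈ k.1 := by
              intro k hk
              rw [hNdec] at hk
              rcases Multiset.mem_cons.1 hk with rfl | hk'
              · rw [hh₀]; simp
              rcases Multiset.mem_cons.1 hk' with rfl | hk''
              · rw [hg]; simp
              · exact hkx k hk''
            have hcntN : Multiset.count c (Dm N₁) = Multiset.card N₁ := by
              rw [Dm, Multiset.count_bind]
              rw [Multiset.map_congr rfl
                (fun e he => Multiset.count_eq_one_of_mem e.1.nodup (hallc e he))]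
              simp
            have hcntM : Multiset.count c (Dm M₁) + 1 ≤ Multiset.card M₁ := by
              obtain ⟨M₂, hMdec⟩ := Multiset.exists_cons_of_mem he₀M
              have h0 : Multiset.count c e₀.1.val = 0 := by
                rw [Multiset.count_eq_zero]
                intro hmem
                have : c ∈ e₀.1 := hmem
                rw [he₀] at this
                rcases Finset.mem_insert.1 this with h' | h'
                · exact hca h'
                · exact hcb (Finset.mem_singleton.1 h')
              have hle2 : Multiset.count c (Dm M₂) ≤ Multiset.card M₂ := by
                rw [Dm, Multiset.count_bind]
                calc (M₂.map fun e => Multiset.count c e.1.val).sum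
                    ≤ (M₂.map fun _ => 1).sum := Multiset.sum_map_le_sum_map _ _
                      (fun e _ => Multiset.nodup_iff_count_le_one.1 e.1.nodup c)
                  _ = Multiset.card M₂ := by simp
              rw [hMdec, Dm_cons, Multiset.count_add, Multiset.card_cons, h0]
              omega
            have hcards : Multiset.card M₁ = Multiset.card N₁ := by omega
            rw [hD1, hcntN] at hcntM
            omega
      · -- ODD CASE
        have hn3M1 : n3 M₁ = 1 := by omega
        have hn3N1 : n3 N₁ = 1 := by omega
        have inner : ∀ (j : ℕ) (P Q : Multiset (Edge V E)) (T T' : Edge V E),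
            Dm P = Dm Q → Multiset.card (Dm P) = s →
            T ∈ P → T.1.card = 3 → (∀ e ∈ P, e.1.card = 3 → e = T) → P.count T = 1 →
            T' ∈ Q → T'.1.card = 3 → (∀ e ∈ Q, e.1.card = 3 → e = T') → Q.count T' = 1 →
            (T.1 \ T'.1).card ≤ j → mmon K P - mmon K Q ∈ JJ K V E := by
          intro j
          induction j with
          | zero =>
            intro P Q T T' hD hs hTP hT3 h3P hcP hT'Q hT'3 h3Q hcQ hj
            have hTT' : T = T' := by
              refine Subtype.ext (Finset.eq_of_subset_of_card_le ?_ (by rw [hT3, hT'3]))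
              exact Finset.sdiff_eq_empty_iff_subset.1 (Finset.card_eq_zero.1 (Nat.le_zero.1 hj))
            exact factor P Q T hD hs hTP (hTT' ▸ hT'Q)
          | succ j IHj =>
            intro P Q T T' hD hs hTP hT3 h3P hcP hT'Q hT'3 h3Q hcQ hj
            by_cases hcom2 : ∃ e, e ∈ P ∧ e ∈ Q
            · obtain ⟨e, h1, h2⟩ := hcom2
              exact factor P Q e hD hs h1 h2
            push_neg at hcom2
            by_cases hjle : (T.1 \ T'.1).card ≤ j
            · exact IHj P Q T T' hD hs hTP hT3 h3P hcP hT'Q hT'3 h3Q hcQ hjle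
            have hjeq : (T.1 \ T'.1).card = j + 1 := by omega
            obtain ⟨u, hu⟩ := Finset.card_pos.1 (show 0 < (T.1 \ T'.1).card by omega)
            obtain ⟨huT, huT'⟩ := Finset.mem_sdiff.1 hu
            have hrev : (T'.1 \ T.1).card = j + 1 := by
              have h1 := Finset.card_sdiff_add_card_inter T.1 T'.1
              have h2 := Finset.card_sdiff_add_card_inter T'.1 T.1
              rw [Finset.inter_comm] at h2
              omega
            obtain ⟨w, hw⟩ := Finset.card_pos.1 (show 0 < (T'.1 \ T.1).card by omega)
            obtain ⟨hwT', hwT⟩ := Finset.mem_sdiff.1 hw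
            have hwu : w ≠ u := fun hEq => hwT (hEq ▸ huT)
            have huw : u ≠ w := Ne.symm hwu
            have hwTe : w ∉ T.1.erase u := fun hmem => hwT (Finset.mem_of_mem_erase hmem)
            set Tn := mkE hE (insert w (T.1.erase u))
              (Or.inr (by rw [Finset.card_insert_of_notMem hwTe,
                Finset.card_erase_of_mem huT, hT3])) with hTndef
            have hTnval : Tn.1.val = w ::ₘ T.1.val.erase u := by
              rw [hTndef, mkE_val, Finset.insert_val_of_notMem hwTe, Finset.erase_val]
            have hTn3 : Tn.1.card = 3 := by
              rw [hTndef, mkE_val, Finset.card_insert_of_notMem hwTe,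
                Finset.card_erase_of_mem huT, hT3]
            have hwTn : w ∈ Tn.1 := by
              rw [hTndef, mkE_val]
              exact Finset.mem_insert_self _ _
            have hTnT : Tn ≠ T := fun hEq => hwT (hEq ▸ hwTn)
            have hTnsd : (Tn.1 \ T'.1).card = j := by
              have hset : Tn.1 \ T'.1 = (T.1 \ T'.1).erase u := by
                rw [hTndef, mkE_val, Finset.insert_sdiff_of_mem _ hwT']
                ext x
                simp only [Finset.mem_sdiff, Finset.mem_erase]
                tauto
              rw [hset, Finset.card_erase_of_mem (Finset.mem_sdiff.2 ⟨huT, huT'⟩), hjeq]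
              omega
            by_cases hm : ∃ m ∈ P, w ∈ m.1 ∧ u ∉ m.1
            · obtain ⟨m, hmP, hwm, hum⟩ := hm
              have hmT : m ≠ T := fun hEq => hwT (hEq ▸ hwm)
              have hm2 : m.1.card = 2 := card2_of_ne3 hE (fun h3 => hmT (h3P m hmP h3))
              obtain ⟨z, hzw, hmval⟩ := exists_pair_eq hm2 hwm
              have hzu : z ≠ u := fun hEq => hum (by rw [hmval, ← hEq]; simp)
              obtain ⟨R, hPdec⟩ := cons2_of_mem hTP ((Multiset.mem_erase_of_ne hmT).2 hmP)
              set uz := mkE hE {u, z} (Or.inl (Finset.card_pair (Ne.symm hzu))) with huzdef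
              set A : Multiset (Edge V E) := T ::ₘ m ::ₘ 0 with hAdef
              set B : Multiset (Edge V E) := Tn ::ₘ uz ::ₘ 0 with hBdef
              have hDab : Dm A = Dm B := by
                show Dm (T ::ₘ m ::ₘ 0) = Dm (Tn ::ₘ uz ::ₘ 0)
                simp only [Dm_cons, Dm_zero, add_zero, huzdef, mkE_val]
                rw [hTnval, hmval, pair_val (Ne.symm hzw), pair_val (Ne.symm hzu)]
                obtain ⟨X, hX⟩ : ∃ X, T.1.val.erase u = X := ⟨_, rfl⟩
                rw [hX, show T.1.val = u ::ₘ X from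
                  hX ▸ (Multiset.cons_erase (mem_val_edge huT)).symm]
                simp only [← Multiset.singleton_add]
                abel
              have hPdec' : P = A + R := by rw [hPdec, hAdef]; simp [Multiset.cons_add]
              have hmv : mmon K P - mmon K (B + R) ∈ JJ K V E := by
                rw [hPdec']
                exact moveCtx R hDab (by simp [hAdef]) (by simp [hBdef])
              have hcTR : R.count T = 0 := by
                have hc := hcP
                rw [hPdec', Multiset.count_add] at hc
                have hA1 : A.count T = 1 := by
                  rw [hAdef]
                  simp [Multiset.count_cons, hmT, Ne.symm hmT]
                omega
              have huz2 : uz.1.card = 2 := by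
                rw [huzdef, mkE_val]
                exact Finset.card_pair (Ne.symm hzu)
              have hrec : mmon K (B + R) - mmon K Q ∈ JJ K V E := by
                refine IHj (B + R) Q Tn T' ?_ ?_ ?_ hTn3 ?_ ?_ hT'Q hT'3 h3Q hcQ
                  (le_of_eq hTnsd)
                · rw [Dm_add, ← hDab, ← Dm_add, ← hPdec', hD]
                · rw [Dm_add, ← hDab, ← Dm_add, ← hPdec', hs]
                · exact Multiset.mem_add.2 (Or.inl (by rw [hBdef]; exact Multiset.mem_cons_self _ _))
                · intro e he h3
                  rcases Multiset.mem_add.1 he with hB | hR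
                  · rw [hBdef] at hB
                    rcases Multiset.mem_cons.1 hB with rfl | hB'
                    · rfl
                    · rw [Multiset.mem_singleton.1 hB'] at h3
                      rw [huz2] at h3
                      omega
                  · exfalso
                    have heP : e ∈ P := by
                      rw [hPdec']
                      exact Multiset.mem_add.2 (Or.inr hR)
                    have heT : e = T := h3P e heP h3
                    rw [heT] at hR
                    have := Multiset.count_pos.2 hR
                    omega
                · rw [Multiset.count_add]
                  have h1 : B.count Tn = 1 := by
                    rw [hBdef]
                    have : uz ≠ Tn := by
                      intro hEq
                      rw [← hEq] at hTn3
                      rw [huz2] at hTn3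
                      omega
                    simp [Multiset.count_cons, this, Ne.symm this]
                  have h2 : R.count Tn = 0 := by
                    rw [Multiset.count_eq_zero]
                    intro hTnR
                    have heP : Tn ∈ P := by
                      rw [hPdec']
                      exact Multiset.mem_add.2 (Or.inr hTnR)
                    exact hTnT (h3P Tn heP hTn3)
                  omega
              exact Jglue2 hmv hrec
            · push_neg at hm
              have hwDP : w ∈ Dm P := by
                rw [hD]
                exact mem_Dm.2 ⟨T', hT'Q, hwT'⟩
              obtain ⟨m₀, hm₀P, hwm₀⟩ := mem_Dm.1 hwDP
              have hum₀ : u ∈ m₀.1 := hm m₀ hm₀P hwm₀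
              have hm₀T : m₀ ≠ T := fun hEq => hwT (hEq ▸ hwm₀)
              have hm₀2 : m₀.1.card = 2 := card2_of_ne3 hE (fun h3 => hm₀T (h3P m₀ hm₀P h3))
              obtain ⟨z, hzw, hm₀val⟩ := exists_pair_eq hm₀2 hwm₀
              have hzu : z = u := by
                have := hm₀val ▸ hum₀
                rcases Finset.mem_insert.1 this with h' | h'
                · exact absurd h'.symm hwu
                · exact (Finset.mem_singleton.1 h').symm
              rw [hzu] at hm₀val
              obtain ⟨R, hPdec⟩ := cons2_of_mem hTP ((Multiset.mem_erase_of_ne hm₀T).2 hm₀P)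
              by_cases hk : ∃ k ∈ R, u ∉ k.1
              · obtain ⟨k, hkR, huk⟩ := hk
                have hkP : k ∈ P := by
                  rw [hPdec]
                  exact Multiset.mem_cons_of_mem (Multiset.mem_cons_of_mem hkR)
                have hkT : k ≠ T := fun hEq => huk (hEq ▸ huT)
                have hk2 : k.1.card = 2 := card2_of_ne3 hE (fun h3 => hkT (h3P k hkP h3))
                obtain ⟨y₁, z₁, hyz₁, hkval⟩ := Finset.card_eq_two.1 hk2
                have huy₁ : u ≠ y₁ := by rintro rfl; exact huk (by rw [hkval]; simp)
                have huz₁ : u ≠ z₁ := by rintro rfl; exact huk (by rw [hkval]; simp)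
                obtain ⟨R', hRdec⟩ := Multiset.exists_cons_of_mem hkR
                set uy := mkE hE {u, y₁} (Or.inl (Finset.card_pair huy₁)) with huydef
                set uz := mkE hE {u, z₁} (Or.inl (Finset.card_pair huz₁)) with huzdef
                set A : Multiset (Edge V E) := T ::ₘ m₀ ::ₘ k ::ₘ 0 with hAdef
                set B : Multiset (Edge V E) := Tn ::ₘ uy ::ₘ uz ::ₘ 0 with hBdef
                have hDab : Dm A = Dm B := by
                  show Dm (T ::ₘ m₀ ::ₘ k ::ₘ 0) = Dm (Tn ::ₘ uy ::ₘ uz ::ₘ 0)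
                  simp only [Dm_cons, Dm_zero, add_zero, huydef, huzdef, mkE_val]
                  rw [hTnval, hm₀val, hkval, pair_val hwu, pair_val hyz₁,
                    pair_val huy₁, pair_val huz₁]
                  obtain ⟨X, hX⟩ : ∃ X, T.1.val.erase u = X := ⟨_, rfl⟩
                  rw [hX, show T.1.val = u ::ₘ X from
                    hX ▸ (Multiset.cons_erase (mem_val_edge huT)).symm]
                  simp only [← Multiset.singleton_add]
                  abel
                have hPdec' : P = A + R' := by
                  rw [hPdec, hRdec, hAdef]
                  simp [Multiset.cons_add]
                have hmv : mmon K P - mmon K (B + R') ∈ JJ K V E := by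
                  rw [hPdec']
                  exact moveCtx R' hDab (by simp [hAdef]) (by simp [hBdef])
                have hcTR : R'.count T = 0 := by
                  have hc := hcP
                  rw [hPdec', Multiset.count_add] at hc
                  have hA1 : A.count T = 1 := by
                    rw [hAdef]
                    simp [Multiset.count_cons, hm₀T, hkT, Ne.symm hm₀T, Ne.symm hkT]
                  omega
                have huy2 : uy.1.card = 2 := by
                  rw [huydef, mkE_val]; exact Finset.card_pair huy₁
                have huz2 : uz.1.card = 2 := by
                  rw [huzdef, mkE_val]; exact Finset.card_pair huz₁
                have hrec : mmon K (B + R') - mmon K Q ∈ JJ K V E := by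
                  refine IHj (B + R') Q Tn T' ?_ ?_ ?_ hTn3 ?_ ?_ hT'Q hT'3 h3Q hcQ
                    (le_of_eq hTnsd)
                  · rw [Dm_add, ← hDab, ← Dm_add, ← hPdec', hD]
                  · rw [Dm_add, ← hDab, ← Dm_add, ← hPdec', hs]
                  · exact Multiset.mem_add.2 (Or.inl (by rw [hBdef]; exact Multiset.mem_cons_self _ _))
                  · intro e he h3
                    rcases Multiset.mem_add.1 he with hB | hR'
                    · rw [hBdef] at hB
                      rcases Multiset.mem_cons.1 hB with rfl | hB'
                      · rfl
                      rcases Multiset.mem_cons.1 hB' with rfl | hB''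
                      · rw [huy2] at h3; omega
                      · rw [Multiset.mem_singleton.1 hB''] at h3
                        rw [huz2] at h3
                        omega
                    · exfalso
                      have heP : e ∈ P := by
                        rw [hPdec']
                        exact Multiset.mem_add.2 (Or.inr hR')
                      have heT : e = T := h3P e heP h3
                      rw [heT] at hR'
                      have := Multiset.count_pos.2 hR'
                      omega
                  · rw [Multiset.count_add]
                    have h1 : B.count Tn = 1 := by
                      rw [hBdef]
                      have h1' : uy ≠ Tn := by
                        intro hEq
                        rw [← hEq] at hTn3
                        rw [huy2] at hTn3
                        omega
                      have h2' : uz ≠ Tn := by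
                        intro hEq
                        rw [← hEq] at hTn3
                        rw [huz2] at hTn3
                        omega
                      simp [Multiset.count_cons, h1', h2', Ne.symm h1', Ne.symm h2']
                    have h2 : R'.count Tn = 0 := by
                      rw [Multiset.count_eq_zero]
                      intro hTnR
                      have heP : Tn ∈ P := by
                        rw [hPdec']
                        exact Multiset.mem_add.2 (Or.inr hTnR)
                      exact hTnT (h3P Tn heP hTn3)
                    omega
                exact Jglue2 hmv hrec
              · push_neg at hk
                have huDQ : u ∈ Dm Q := by
                  rw [← hD]
                  exact mem_Dm.2 ⟨T, hTP, huT⟩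
                obtain ⟨nn, hnQ, hunn⟩ := mem_Dm.1 huDQ
                have hnT' : nn ≠ T' := fun hEq => huT' (hEq ▸ hunn)
                have hn2 : nn.1.card = 2 := card2_of_ne3 hE (fun h3 => hnT' (h3Q nn hnQ h3))
                obtain ⟨y, hyu, hnval⟩ := exists_pair_eq hn2 hunn
                by_cases hyw : y = w
                · exfalso
                  have hnm : nn = m₀ := Subtype.ext (by
                    rw [hnval, hm₀val, hyw, Finset.pair_comm])
                  exact hcom2 m₀ hm₀P (hnm ▸ hnQ)
                · have huTe' : u ∉ T'.1.erase w := fun hmem => huT' (Finset.mem_of_mem_erase hmem)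
                  set Tn' := mkE hE (insert u (T'.1.erase w))
                    (Or.inr (by rw [Finset.card_insert_of_notMem huTe',
                      Finset.card_erase_of_mem hwT', hT'3])) with hTn'def
                  have hTn'val : Tn'.1.val = u ::ₘ T'.1.val.erase w := by
                    rw [hTn'def, mkE_val, Finset.insert_val_of_notMem huTe', Finset.erase_val]
                  have hTn'3 : Tn'.1.card = 3 := by
                    rw [hTn'def, mkE_val, Finset.card_insert_of_notMem huTe',
                      Finset.card_erase_of_mem hwT', hT'3]
                  have huTn' : u ∈ Tn'.1 := by
                    rw [hTn'def, mkE_val]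
                    exact Finset.mem_insert_self _ _
                  have hTn'T' : Tn' ≠ T' := fun hEq => huT' (hEq ▸ huTn')
                  have hTn'sd : (T.1 \ Tn'.1).card = j := by
                    have hset : T.1 \ Tn'.1 = (T.1 \ T'.1).erase u := by
                      ext x
                      rw [hTn'def, mkE_val]
                      simp only [Finset.mem_sdiff, Finset.mem_erase, Finset.mem_insert, not_or]
                      constructor
                      · rintro ⟨h1, h2, h3⟩
                        exact ⟨h2, h1, fun hT' => h3 ⟨fun hEq => hwT (hEq ▸ h1), hT'⟩⟩
                      · rintro ⟨hxu, hxT, hxT'⟩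
                        exact ⟨hxT, hxu, fun h => hxT' h.2⟩
                    rw [hset, Finset.card_erase_of_mem (Finset.mem_sdiff.2 ⟨huT, huT'⟩), hjeq]
                    omega
                  have hnyw : w ≠ y := Ne.symm hyw
                  obtain ⟨RQ, hQdec⟩ := cons2_of_mem hT'Q
                    ((Multiset.mem_erase_of_ne hnT').2 hnQ)
                  set wy := mkE hE {w, y} (Or.inl (Finset.card_pair hnyw)) with hwydef
                  set A : Multiset (Edge V E) := T' ::ₘ nn ::ₘ 0 with hAdef
                  set B : Multiset (Edge V E) := Tn' ::ₘ wy ::ₘ 0 with hBdef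
                  have hDab : Dm A = Dm B := by
                    show Dm (T' ::ₘ nn ::ₘ 0) = Dm (Tn' ::ₘ wy ::ₘ 0)
                    simp only [Dm_cons, Dm_zero, add_zero, hwydef, mkE_val]
                    rw [hTn'val, hnval, pair_val (Ne.symm hyu), pair_val hnyw]
                    obtain ⟨X, hX⟩ : ∃ X, T'.1.val.erase w = X := ⟨_, rfl⟩
                    rw [hX, show T'.1.val = w ::ₘ X from
                      hX ▸ (Multiset.cons_erase (mem_val_edge hwT')).symm]
                    simp only [← Multiset.singleton_add]
                    abel
                  have hQdec' : Q = A + RQ := by rw [hQdec, hAdef]; simp [Multiset.cons_add]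
                  have hmv : mmon K Q - mmon K (B + RQ) ∈ JJ K V E := by
                    rw [hQdec']
                    exact moveCtx RQ hDab (by simp [hAdef]) (by simp [hBdef])
                  have hcT'R : RQ.count T' = 0 := by
                    have hc := hcQ
                    rw [hQdec', Multiset.count_add] at hc
                    have hA1 : A.count T' = 1 := by
                      rw [hAdef]
                      simp [Multiset.count_cons, hnT', Ne.symm hnT']
                    omega
                  have hwy2 : wy.1.card = 2 := by
                    rw [hwydef, mkE_val]; exact Finset.card_pair hnyw
                  have hrec : mmon K P - mmon K (B + RQ) ∈ JJ K V E := by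
                    refine IHj P (B + RQ) T Tn' ?_ hs hTP hT3 h3P hcP ?_ hTn'3 ?_ ?_
                      (le_of_eq hTn'sd)
                    · rw [hD, hQdec', Dm_add, Dm_add, hDab]
                    · exact Multiset.mem_add.2 (Or.inl (by rw [hBdef]; exact Multiset.mem_cons_self _ _))
                    · intro e he h3
                      rcases Multiset.mem_add.1 he with hB | hRQ
                      · rw [hBdef] at hB
                        rcases Multiset.mem_cons.1 hB with rfl | hB'
                        · rfl
                        · rw [Multiset.mem_singleton.1 hB'] at h3
                          rw [hwy2] at h3
                          omega
                      · exfalso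
                        have heQ : e ∈ Q := by
                          rw [hQdec']
                          exact Multiset.mem_add.2 (Or.inr hRQ)
                        have heT' : e = T' := h3Q e heQ h3
                        rw [heT'] at hRQ
                        have := Multiset.count_pos.2 hRQ
                        omega
                    · rw [Multiset.count_add]
                      have h1 : B.count Tn' = 1 := by
                        rw [hBdef]
                        have : wy ≠ Tn' := by
                          intro hEq
                          rw [← hEq] at hTn'3
                          rw [hwy2] at hTn'3
                          omega
                        simp [Multiset.count_cons, this, Ne.symm this]
                      have h2 : RQ.count Tn' = 0 := by
                        rw [Multiset.count_eq_zero]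
                        intro hTnR
                        have heQ : Tn' ∈ Q := by
                          rw [hQdec']
                          exact Multiset.mem_add.2 (Or.inr hTnR)
                        exact hTn'T' (h3Q Tn' heQ hTn'3)
                      omega
                  exact Jglue hrec hmv
        -- extract the unique triangles and apply inner
        obtain ⟨T, hfM⟩ := Multiset.card_eq_one.1 hn3M1
        have hTf : T ∈ M₁.filter (fun e => e.1.card = 3) := by
          rw [hfM]; exact Multiset.mem_singleton_self T
        have hTM : T ∈ M₁ := Multiset.mem_of_mem_filter hTf
        have hT3 : T.1.card = 3 := (Multiset.mem_filter.1 hTf).2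
        have h3M : ∀ e ∈ M₁, e.1.card = 3 → e = T := by
          intro e he h3
          have : e ∈ M₁.filter (fun e => e.1.card = 3) := Multiset.mem_filter.2 ⟨he, h3⟩
          rw [hfM] at this
          exact Multiset.mem_singleton.1 this
        have hcT : M₁.count T = 1 := by
          have := congrArg (Multiset.count T) hfM
          rwa [Multiset.count_filter, if_pos hT3, Multiset.count_singleton_self] at this
        obtain ⟨T', hfN⟩ := Multiset.card_eq_one.1 hn3N1
        have hT'f : T' ∈ N₁.filter (fun e => e.1.card = 3) := by
          rw [hfN]; exact Multiset.mem_singleton_self T'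
        have hT'N : T' ∈ N₁ := Multiset.mem_of_mem_filter hT'f
        have hT'3 : T'.1.card = 3 := (Multiset.mem_filter.1 hT'f).2
        have h3N : ∀ e ∈ N₁, e.1.card = 3 → e = T' := by
          intro e he h3
          have : e ∈ N₁.filter (fun e => e.1.card = 3) := Multiset.mem_filter.2 ⟨he, h3⟩
          rw [hfN] at this
          exact Multiset.mem_singleton.1 this
        have hcT' : N₁.count T' = 1 := by
          have := congrArg (Multiset.count T') hfN
          rwa [Multiset.count_filter, if_pos hT'3, Multiset.count_singleton_self] at this
        refine inner 3 M₁ N₁ T T' hD1 hs1 hTM hT3 h3M hcT hT'N hT'3 h3N hcT' ?_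
        calc (T.1 \ T'.1).card ≤ T.1.card := Finset.card_le_card (Finset.sdiff_subset)
          _ = 3 := hT3
  have h1 := Ideal.add_mem _ hJM hmain
  rw [sub_add_sub_cancel] at h1
  have h2 := Ideal.sub_mem _ h1 hJN
  rwa [sub_sub_sub_cancel_right] at h2

end Key

section SpanA

noncomputable def DF (a : Edge V E →₀ ℕ) : V →₀ ℕ :=
  Multiset.toFinsupp (Dm (Finsupp.toMultiset a))

lemma mmon_toMultiset (a : Edge V E →₀ ℕ) :
    mmon K a.toMultiset = (monomial a 1 : MvPolynomial (Edge V E) K) := by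
  rw [mmon_eq_monomial, Finsupp.toMultiset_toFinsupp]

lemma phi_monomial (a : Edge V E →₀ ℕ) (c : K) :
    phiH K V E (monomial a c) = monomial (DF a) c := by
  have h1 : (monomial a c : MvPolynomial (Edge V E) K) = C c * monomial a 1 := by
    rw [C_mul_monomial, mul_one]
  have hC : phiH K V E (C c) = C c := by
    rw [phiH, aeval_C, algebraMap_eq]
  rw [h1, map_mul, ← mmon_toMultiset, phi_mmon, mmon_eq_monomial, hC, C_mul_monomial, mul_one]
  rfl

lemma ker_sub_span (f : MvPolynomial (Edge V E) K) (hf : phiH K V E f = 0) :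
    f ∈ Submodule.span K
      {g | ∃ A B : Multiset (Edge V E), Dm A = Dm B ∧ g = mmon K A - mmon K B} := by
  generalize hc : f.support.card = c
  induction c using Nat.strong_induction_on generalizing f with
  | _ c IHc =>
  by_cases hf0 : f = 0
  · rw [hf0]; exact zero_mem _
  obtain ⟨a₀, ha₀⟩ : ∃ a, a ∈ f.support := by
    rcases Finset.eq_empty_or_nonempty f.support with h | ⟨a, ha⟩
    · exact absurd (support_eq_empty.1 h) hf0
    · exact ⟨a, ha⟩
  have hsum : ∑ a ∈ f.support.filter (fun a => DF a = DF a₀), coeff a f = 0 := by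
    have hphi : (0 : MvPolynomial V K) = ∑ a ∈ f.support, monomial (DF a) (coeff a f) := by
      conv_lhs => rw [← hf, as_sum f]
      rw [map_sum]
      exact Finset.sum_congr rfl fun a _ => phi_monomial a _
    have hco := congrArg (coeff (DF a₀)) hphi
    rw [coeff_zero, coeff_sum] at hco
    rw [Finset.sum_filter]
    calc ∑ a ∈ f.support, (if DF a = DF a₀ then coeff a f else 0)
        = ∑ a ∈ f.support, coeff (DF a₀) (monomial (DF a) (coeff a f)) :=
          Finset.sum_congr rfl fun a _ => (coeff_monomial _ _ _).symm
      _ = 0 := hco.symm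
  have hb : ∃ b ∈ f.support, DF b = DF a₀ ∧ b ≠ a₀ := by
    by_contra hcon
    push_neg at hcon
    have hsing : f.support.filter (fun a => DF a = DF a₀) = {a₀} := by
      apply Finset.eq_singleton_iff_unique_mem.2
      refine ⟨Finset.mem_filter.2 ⟨ha₀, rfl⟩, fun x hx => ?_⟩
      obtain ⟨hx1, hx2⟩ := Finset.mem_filter.1 hx
      exact hcon x hx1 hx2
    rw [hsing, Finset.sum_singleton] at hsum
    exact (mem_support_iff.1 ha₀) hsum
  obtain ⟨b, hbs, hbD, hba⟩ := hb
  set c₀ := coeff a₀ f with hc₀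
  set bin : MvPolynomial (Edge V E) K := monomial a₀ 1 - monomial b 1 with hbin
  have hbinS : bin ∈ {g | ∃ A B : Multiset (Edge V E), Dm A = Dm B ∧ g = mmon K A - mmon K B} := by
    refine ⟨a₀.toMultiset, b.toMultiset, ?_, ?_⟩
    · exact Multiset.toFinsupp.injective hbD.symm
    · rw [hbin, mmon_toMultiset, mmon_toMultiset]
  set g := f - C c₀ * bin with hg
  have hgker : phiH K V E g = 0 := by
    rw [hg, map_sub, hf, map_mul, hbin, map_sub, phi_monomial, phi_monomial, hbD]
    simp
  have hsupp : g.support ⊆ f.support.erase a₀ := by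
    intro x hx
    rw [mem_support_iff] at hx
    have hcg : coeff x g =
        coeff x f - c₀ * ((if a₀ = x then (1 : K) else 0) - (if b = x then (1 : K) else 0)) := by
      rw [hg, hbin]
      simp [coeff_sub, coeff_monomial]
    have hxa : x ≠ a₀ := by
      rintro rfl
      rw [if_pos rfl, if_neg hba] at hcg
      exact hx (by rw [hcg, ← hc₀]; ring)
    refine Finset.mem_erase.2 ⟨hxa, ?_⟩
    by_contra hxf
    have hxb : x ≠ b := fun hEq => hxf (hEq ▸ hbs)
    rw [if_neg (Ne.symm hxa), if_neg (Ne.symm hxb), notMem_support_iff.1 hxf] at hcg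
    rw [hcg] at hx
    simp at hx
  have hcard : g.support.card < c := by
    rw [← hc]
    calc g.support.card ≤ (f.support.erase a₀).card := Finset.card_le_card hsupp
      _ < f.support.card := by
          rw [Finset.card_erase_of_mem ha₀]
          have := Finset.card_pos.2 ⟨a₀, ha₀⟩
          omega
  have hgspan := IHc _ hcard g hgker rfl
  have hfg : f = g + C c₀ * bin := by rw [hg]; ring
  rw [hfg]
  refine Submodule.add_mem _ hgspan ?_
  rw [← smul_eq_C_mul]
  exact Submodule.smul_mem _ _ (Submodule.subset_span hbinS)

end SpanA

lemma main_result (hE : ∀ s : Finset V, s ∈ E ↔ s.card = 2 ∨ s.card = 3) :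
    GenInDegLE K (toricIdeal K V E) 3 := by
  show toricIdeal K V E = Ideal.span {f | f ∈ toricIdeal K V E ∧ f.totalDegree ≤ 3}
  refine le_antisymm ?_ (Ideal.span_le.2 fun f hf => hf.1)
  intro f hf
  have hker : phiH K V E f = 0 := mem_toric_iff.1 hf
  have hspan := ker_sub_span f hker
  have hsub : {g | ∃ A B : Multiset (Edge V E), Dm A = Dm B ∧ g = mmon K A - mmon K B} ⊆
      (JJ K V E : Set (MvPolynomial (Edge V E) K)) := by
    rintro g ⟨A, B, hD, rfl⟩
    exact key hE (Multiset.card (Dm A)) A B hD rfl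
  have h2 : Submodule.span K
      {g | ∃ A B : Multiset (Edge V E), Dm A = Dm B ∧ g = mmon K A - mmon K B} ≤
      Submodule.restrictScalars K (JJ K V E) := Submodule.span_le.2 hsub
  exact h2 hspan

end Aux

end ToricHG

namespace ToricHG

/-- For `n ≥ 2`, the toric ideal of the hypergraph on `{1, …, n}` whose edges
are all subsets of size `2` or `3` is generated by its elements of total degree at most `3`
(i.e., by quadrics and cubics). -/
theorem two_three_edges_gen_in_degree_three
    (K : Type) [Field K] (n : ℕ) (hn : 2 ≤ n)
    (E : Finset (Finset (Fin n)))
    (hEdef : E = Finset.univ.filter (fun e : Finset (Fin n) => e.card = 2 ∨ e.card = 3)) :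
    GenInDegLE K (toricIdeal K (Fin n) E) 3 := by
  have hE : ∀ s : Finset (Fin n), s ∈ E ↔ s.card = 2 ∨ s.card = 3 := by
    intro s
    rw [hEdef]
    simp
  exact main_result hE

end ToricHG
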